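/- Let (X,E) be a uniformly locally finite coarse space. For all ε, δ > 0 there is γ > 0 such that for all E, F ∈ E there is W ∈ E for which the following holds: if p, q, a ∈ B(ℓ₂(X)), where p is a projection and q is a rank-one projection, and supp(q) ⊆ E, ‖p − a‖ < γ, supp(a) ⊆ F, and ‖pq‖ ≥ δ, then p is (ε,W)-normed. -/

import Mathlib

noncomputable section

namespace RoePaper

open scoped InnerProductSpace ENNReal Classical

/-- `ℓ₂(X)`: the Hilbert space of square-summable complex functions on `X`. -/
abbrev l2 (X : Type*) := lp (fun _ : X => ℂ) 2

/-- Bounded operators on `ℓ₂(X)`. -/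
abbrev Bop (X : Type*) := l2 X →L[ℂ] l2 X

/-- The canonical orthonormal basis vector `δ_x` of `ℓ₂(X)`. -/
def delta {X : Type*} (x : X) : l2 X := lp.single 2 x 1

/-- The matrix entry `a_{x,z} = ⟨a δ_z, δ_x⟩` of an operator. -/
def entry {X : Type*} (a : Bop X) (x z : X) : ℂ := ⟪delta x, a (delta z)⟫_ℂ

/-- The (matrix) support of an operator. -/
def osupp {X : Type*} (a : Bop X) : Set (X × X) := {q : X × X | entry a q.1 q.2 ≠ 0}

theorem norm_indicator_apply_le {X : Type*} (A : Set X) (f : l2 X) (x : X) :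
    ‖A.indicator (⇑f) x‖ ≤ ‖f x‖ := by
  by_cases hx : x ∈ A <;> simp [Set.indicator_apply, hx]

theorem memℓp_indicator {X : Type*} (A : Set X) (f : l2 X) :
    Memℓp (A.indicator ⇑f) 2 := by
  have hf : Summable fun x => ‖f x‖ ^ (2 : ℝ≥0∞).toReal :=
    (lp.memℓp f).summable (by norm_num)
  refine memℓp_gen (hf.of_nonneg_of_le (fun x => by positivity) fun x => ?_)
  have h2 : (0:ℝ) ≤ (2 : ℝ≥0∞).toReal := by norm_num
  exact Real.rpow_le_rpow (norm_nonneg _) (norm_indicator_apply_le A f x) h2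

/-- The orthogonal projection of `ℓ₂(X)` onto `ℓ₂(A)`, i.e. (pointwise) multiplication by the
indicator function of `A ⊆ X`. -/
def chi {X : Type*} (A : Set X) : Bop X :=
  LinearMap.mkContinuous
    { toFun := fun f => (⟨A.indicator ⇑f, memℓp_indicator A f⟩ : l2 X)
      map_add' := by
        intro f g
        apply lp.ext
        simp only [lp.coeFn_add]
        exact Set.indicator_add A ⇑f ⇑g
      map_smul' := by
        intro c f
        apply lp.ext
        simp only [lp.coeFn_smul, RingHom.id_apply]
        exact Set.indicator_const_smul A c ⇑f }
    1
    (by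
      intro f
      rw [one_mul]
      refine lp.norm_le_of_forall_sum_le (by norm_num) (norm_nonneg _) fun s => ?_
      calc ∑ i ∈ s, ‖A.indicator (⇑f) i‖ ^ (2 : ℝ≥0∞).toReal
          ≤ ∑ i ∈ s, ‖f i‖ ^ (2 : ℝ≥0∞).toReal := by
            refine Finset.sum_le_sum fun i _ => ?_
            exact Real.rpow_le_rpow (norm_nonneg _) (norm_indicator_apply_le A f i) (by norm_num)
        _ ≤ ‖f‖ ^ (2 : ℝ≥0∞).toReal := lp.sum_rpow_le_norm_rpow (by norm_num) f s)

/-! ### Operator-theoretic notions -/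

variable {X Y : Type*}

/-- A (self-adjoint, idempotent) projection. Stated generically so that it applies both to
operators and to elements of abstract `*`-algebras. -/
def IsProjection {A : Type*} [Mul A] [Star A] (p : A) : Prop := star p = p ∧ p * p = p

/-- The rank of a continuous linear map: the dimension of its range. -/
def opRank {E F : Type*} [NormedAddCommGroup E] [NormedAddCommGroup F]
    [NormedSpace ℂ E] [NormedSpace ℂ F] (a : E →L[ℂ] F) : Cardinal :=
  Module.rank ℂ (LinearMap.range (a : E →ₗ[ℂ] F))

/-- A finite rank operator. -/
def FiniteRank {E F : Type*} [NormedAddCommGroup E] [NormedAddCommGroup F]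
    [NormedSpace ℂ E] [NormedSpace ℂ F] (a : E →L[ℂ] F) : Prop :=
  opRank a < Cardinal.aleph0

/-- A rank one operator. -/
def RankOne {E F : Type*} [NormedAddCommGroup E] [NormedAddCommGroup F]
    [NormedSpace ℂ E] [NormedSpace ℂ F] (a : E →L[ℂ] F) : Prop :=
  opRank a = 1

/-- A compact operator. -/
def CompactOp (a : Bop X) : Prop := IsCompactOperator ⇑a

/-- A ghost operator: its matrix entries vanish (up to `ε`) outside a finite set. -/
def IsGhost (a : Bop X) : Prop :=
  ∀ ε : ℝ, 0 < ε → ∃ A : Set X, A.Finite ∧ ∀ x z : X, x ∉ A → z ∉ A → ‖entry a x z‖ ≤ ε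

/-- `p = SOT-Σ_n χ_{X_n} p χ_{X_n}` for the pairwise disjoint sequence `(X_n)` of finite
nonempty subsets: the blocks `χ_{X_n} p χ_{X_n}` sum to `p` in the strong operator topology. -/
def IsBlockDecomp (p : Bop X) (Xn : ℕ → Set X) : Prop :=
  (∀ n, (Xn n).Finite ∧ (Xn n).Nonempty) ∧ Pairwise (Function.onFun Disjoint Xn) ∧
    ∀ ξ : l2 X, HasSum (fun n => (chi (Xn n) * p * chi (Xn n)) ξ) (p ξ)

/-- A block projection. -/
def IsBlockProjection (p : Bop X) : Prop :=
  IsProjection p ∧ ∃ Xn : ℕ → Set X, IsBlockDecomp p Xn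

/-- A block-rank-one projection. -/
def IsBlockRankOneProjection (p : Bop X) : Prop :=
  IsProjection p ∧ ∃ Xn : ℕ → Set X, IsBlockDecomp p Xn ∧
    ∀ n, RankOne (chi (Xn n) * p * chi (Xn n))

/-! ### Coarse spaces and their uniform Roe algebras -/

/-- A coarse structure on a set `X`. -/
structure CoarseStructure (X : Type*) where
  sets : Set (Set (X × X))
  diagonal_mem : {q : X × X | q.1 = q.2} ∈ sets
  mem_of_subset : ∀ ⦃E F : Set (X × X)⦄, E ∈ sets → F ⊆ E → F ∈ sets
  union_mem : ∀ ⦃E F : Set (X × X)⦄, E ∈ sets → F ∈ sets → E ∪ F ∈ sets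
  inv_mem : ∀ ⦃E : Set (X × X)⦄, E ∈ sets → {q : X × X | (q.2, q.1) ∈ E} ∈ sets
  comp_mem : ∀ ⦃E F : Set (X × X)⦄, E ∈ sets → F ∈ sets →
    {q : X × X | ∃ z, (q.1, z) ∈ E ∧ (z, q.2) ∈ F} ∈ sets

/-- A uniformly locally finite coarse space. -/
def CoarseStructure.ULF (𝓔 : CoarseStructure X) : Prop :=
  ∀ E ∈ 𝓔.sets, ∃ N : ℕ, ∀ x : X,
    {z : X | (x, z) ∈ E}.Finite ∧ {z : X | (x, z) ∈ E}.ncard ≤ N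

/-- A metrizable coarse structure: induced by some metric on `X`. -/
def CoarseStructure.Metrizable (𝓔 : CoarseStructure X) : Prop :=
  ∃ d : X → X → ℝ, (∀ x, d x x = 0) ∧ (∀ x y, d x y = 0 → x = y) ∧
    (∀ x y, d x y = d y x) ∧ (∀ x y z, d x z ≤ d x y + d y z) ∧
    𝓔.sets = {E : Set (X × X) | ∃ r : ℝ, ∀ q ∈ E, d q.1 q.2 ≤ r}

/-- The uniform Roe algebra of a coarse space: the norm closure of the operators with
controlled propagation. -/
def RoeC (𝓔 : CoarseStructure X) : Set (Bop X) :=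
  closure {a : Bop X | osupp a ∈ 𝓔.sets}

/-- An equi-approximable family of operators over a coarse space. -/
def EquiApproxC (𝓔 : CoarseStructure X) (S : Set (Bop X)) : Prop :=
  ∀ ε : ℝ, 0 < ε → ∃ E ∈ 𝓔.sets, ∀ a ∈ S, ∃ b : Bop X, osupp b ⊆ E ∧ ‖a - b‖ ≤ ε

/-- `a` is `(ε,E)`-normed: `‖a χ_A‖ ≥ (1-ε)‖a‖` for some `A` with `A × A ⊆ E`. -/
def IsNormed (a : Bop X) (ε : ℝ) (E : Set (X × X)) : Prop :=
  ∃ A : Set X, A ×ˢ A ⊆ E ∧ (1 - ε) * ‖a‖ ≤ ‖a * chi A‖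

/-- The operator norm localization property for the class `P` of operators, for a coarse
space. -/
def ONLForC (𝓔 : CoarseStructure X) (P : Bop X → Prop) : Prop :=
  ∀ ε : ℝ, 0 < ε → ∀ S : Set (Bop X), S ⊆ RoeC 𝓔 → (∀ a ∈ S, P a) → EquiApproxC 𝓔 S →
    ∃ E ∈ 𝓔.sets, ∀ a ∈ S, IsNormed a ε E

/-! ### Metric spaces and their uniform Roe algebras -/

/-- A uniformly locally finite metric space. -/
def ULFMetric (X : Type*) [MetricSpace X] : Prop :=
  ∀ r : ℝ, 0 < r → ∃ N : ℕ, ∀ x : X,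
    (Metric.closedBall x r).Finite ∧ (Metric.closedBall x r).ncard ≤ N

/-- The operator `a` has propagation at most `s`. -/
def HasPropLE [MetricSpace X] (a : Bop X) (s : ℝ) : Prop :=
  ∀ x z : X, entry a x z ≠ 0 → dist x z ≤ s

/-- The uniform Roe algebra of a metric space: the norm closure of the operators of finite
propagation. -/
def RoeM (X : Type*) [MetricSpace X] : Set (Bop X) :=
  closure {a : Bop X | ∃ s : ℝ, HasPropLE a s}

/-- An equi-approximable family of operators over a metric space. -/
def EquiApproxM [MetricSpace X] (S : Set (Bop X)) : Prop :=
  ∀ ε : ℝ, 0 < ε → ∃ s : ℝ, ∀ a ∈ S, ∃ b : Bop X, HasPropLE b s ∧ ‖a - b‖ ≤ ε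

/-- There is a unit vector `ξ` supported on a set of diameter at most `s` with
`‖a ξ‖ ≥ (1-ε)‖a‖`. -/
def IsVecNormed [MetricSpace X] (a : Bop X) (ε s : ℝ) : Prop :=
  ∃ ξ : l2 X, ‖ξ‖ = 1 ∧ (∀ x z : X, ξ x ≠ 0 → ξ z ≠ 0 → dist x z ≤ s) ∧
    (1 - ε) * ‖a‖ ≤ ‖a ξ‖

/-- The operator norm localization property for the class `P` of operators, for a metric
space. -/
def ONLForM (X : Type*) [MetricSpace X] (P : Bop X → Prop) : Prop :=
  ∀ ε : ℝ, 0 < ε → ∀ S : Set (Bop X), S ⊆ RoeM X → (∀ a ∈ S, P a) → EquiApproxM S →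
    ∃ s : ℝ, ∀ a ∈ S, IsVecNormed a ε s

/-- A sparse decomposition: `(X_n)` pairwise disjoint finite nonempty subsets with
`d(X_n, X_m) → ∞` as `n + m → ∞`. The corresponding sparse subspace is `⋃ n, X_n`. -/
def SparseSeq (X : Type*) [MetricSpace X] (Xn : ℕ → Set X) : Prop :=
  (∀ n, (Xn n).Finite ∧ (Xn n).Nonempty) ∧ Pairwise (Function.onFun Disjoint Xn) ∧
    ∀ r : ℝ, ∃ N : ℕ, ∀ m n : ℕ, m ≠ n → N ≤ m + n →
      ∀ x ∈ Xn m, ∀ z ∈ Xn n, r ≤ dist x z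

/-! ### Coarse maps -/

/-- A coarse map between coarse spaces. -/
def IsCoarseMap (𝓔 : CoarseStructure X) (𝓕 : CoarseStructure Y) (f : X → Y) : Prop :=
  ∀ E ∈ 𝓔.sets, ∃ F ∈ 𝓕.sets, ∀ q : X × X, q ∈ E → (f q.1, f q.2) ∈ F

/-- An expanding map between coarse spaces. -/
def IsExpandingMap (𝓔 : CoarseStructure X) (𝓕 : CoarseStructure Y) (f : X → Y) : Prop :=
  ∀ F ∈ 𝓕.sets, ∃ E ∈ 𝓔.sets, ∀ x z : X, (x, z) ∉ E → (f x, f z) ∉ F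

/-- A coarse embedding. -/
def IsCoarseEmbedding (𝓔 : CoarseStructure X) (𝓕 : CoarseStructure Y) (f : X → Y) : Prop :=
  IsCoarseMap 𝓔 𝓕 f ∧ IsExpandingMap 𝓔 𝓕 f

/-- A coarse equivalence. -/
def IsCoarseEquiv (𝓔 : CoarseStructure X) (𝓕 : CoarseStructure Y) (f : X → Y) : Prop :=
  IsCoarseEmbedding 𝓔 𝓕 f ∧ ∃ F ∈ 𝓕.sets, ∀ y : Y, ∃ x : X, (f x, y) ∈ F

/-- Two coarse spaces are coarsely equivalent. -/
def CoarselyEquivalent (𝓔 : CoarseStructure X) (𝓕 : CoarseStructure Y) : Prop :=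
  ∃ f : X → Y, IsCoarseEquiv 𝓔 𝓕 f

/-- A map is uniformly finite-to-one. -/
def UnifFiniteToOne (f : X → Y) : Prop :=
  ∃ N : ℕ, ∀ y : Y, (f ⁻¹' {y}).Finite ∧ (f ⁻¹' {y}).ncard ≤ N

/-! ### Morphisms given at the ambient level -/

/-- `Φ` (with inverse `Ψ`) is a `*`-isomorphism from the algebra `RX` of operators onto the
algebra `RY`. -/
def StarIsoOn (Φ : Bop X → Bop Y) (Ψ : Bop Y → Bop X)
    (RX : Set (Bop X)) (RY : Set (Bop Y)) : Prop :=
  Set.MapsTo Φ RX RY ∧ Set.MapsTo Ψ RY RX ∧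
    (∀ a ∈ RX, Ψ (Φ a) = a) ∧ (∀ b ∈ RY, Φ (Ψ b) = b) ∧
    (∀ a ∈ RX, ∀ b ∈ RX, Φ (a + b) = Φ a + Φ b) ∧
    (∀ a ∈ RX, ∀ b ∈ RX, Φ (a * b) = Φ a * Φ b) ∧
    (∀ c : ℂ, ∀ a ∈ RX, Φ (c • a) = c • Φ a) ∧
    (∀ a ∈ RX, Φ (star a) = star (Φ a))

/-- `Φ` is an embedding (injective `*`-homomorphism) of the algebra `RX` of operators into
the algebra `RY`. -/
def StarEmbeddingOn (Φ : Bop X → Bop Y) (RX : Set (Bop X)) (RY : Set (Bop Y)) : Prop :=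
  Set.MapsTo Φ RX RY ∧ Set.InjOn Φ RX ∧
    (∀ a ∈ RX, ∀ b ∈ RX, Φ (a + b) = Φ a + Φ b) ∧
    (∀ a ∈ RX, ∀ b ∈ RX, Φ (a * b) = Φ a * Φ b) ∧
    (∀ c : ℂ, ∀ a ∈ RX, Φ (c • a) = c • Φ a) ∧
    (∀ a ∈ RX, Φ (star a) = star (Φ a))

/-- `Φ` is strongly continuous: it maps bounded nets converging in the strong operator
topology to nets converging in the strong operator topology. -/
def StronglyContinuousOn (Φ : Bop X → Bop Y) (RX : Set (Bop X)) : Prop :=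
  ∀ (ι : Type) (l : Filter ι) (a : ι → Bop X) (b : Bop X),
    (∀ i, a i ∈ RX) → b ∈ RX → (∃ C : ℝ, ∀ i, ‖a i‖ ≤ C) →
    (∀ ξ : l2 X, Filter.Tendsto (fun i => (a i) ξ) l (nhds (b ξ))) →
    ∀ η : l2 Y, Filter.Tendsto (fun i => (Φ (a i)) η) l (nhds ((Φ b) η))

/-! ### Subalgebras, masas, Cartan masas (at the level of subsets of an ambient algebra) -/

section Algebraic

variable {A : Type*} [Ring A] [StarRing A] [Module ℂ A]

/-- `B` is a (not necessarily closed) `*`-subalgebra, as a subset of an ambient algebra. -/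
def StarSubalgSet (B : Set A) : Prop :=
  (∀ a ∈ B, ∀ b ∈ B, a + b ∈ B) ∧ (∀ a ∈ B, ∀ b ∈ B, a * b ∈ B) ∧
    (∀ c : ℂ, ∀ a ∈ B, c • a ∈ B) ∧ (∀ a ∈ B, star a ∈ B)

/-- A commutative set of operators. -/
def CommutativeSet (B : Set A) : Prop := ∀ a ∈ B, ∀ b ∈ B, a * b = b * a

/-- `B` is a maximal abelian self-adjoint subalgebra (masa) of `S`. -/
def IsMasaIn (B S : Set A) : Prop :=
  B ⊆ S ∧ StarSubalgSet B ∧ CommutativeSet B ∧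
    ∀ C : Set A, C ⊆ S → StarSubalgSet C → CommutativeSet C → B ⊆ C → C = B

/-- The normalizer of `B` inside `S`. -/
def NormalizerIn (B S : Set A) : Set A :=
  {a ∈ S | ∀ b ∈ B, a * b * star a ∈ B ∧ star a * b * a ∈ B}

/-- `S` is generated, as a C*-algebra, by its subset `G`: every norm-closed
`*`-subalgebra of `S` containing `G` is all of `S`. -/
def GeneratesIn [TopologicalSpace A] (G S : Set A) : Prop :=
  ∀ C : Set A, C ⊆ S → StarSubalgSet C → IsClosed C → G ⊆ C → S ⊆ C

/-- `Υ` is a completely positive map on `S`: for every matrix `x` over `S`, the entrywise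
image under `Υ` of the positive matrix `x* x` is positive. -/
def IsCPOn (S : Set A) (Υ : A → A) : Prop :=
  ∀ n : ℕ, ∀ x : Matrix (Fin n) (Fin n) A, (∀ i j, x i j ∈ S) →
    ∃ y : Matrix (Fin n) (Fin n) A, (star x * x).map Υ = star y * y

/-- `Υ` is a faithful conditional expectation of `S` onto `B`. -/
def FaithfulCondExp (B S : Set A) (Υ : A → A) : Prop :=
  (∀ a ∈ S, Υ a ∈ B) ∧
    (∀ a ∈ S, ∀ b ∈ S, Υ (a + b) = Υ a + Υ b) ∧
    (∀ c : ℂ, ∀ a ∈ S, Υ (c • a) = c • Υ a) ∧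
    IsCPOn S Υ ∧
    (∀ b₁ ∈ B, ∀ b₂ ∈ B, ∀ a ∈ S, Υ (b₁ * a * b₂) = b₁ * Υ a * b₂) ∧
    (∀ a ∈ S, Υ (star a * a) = 0 → a = 0)

/-- `B` is a Cartan masa in `S`. -/
def IsCartanMasaIn [TopologicalSpace A] (B S : Set A) : Prop :=
  IsMasaIn B S ∧ GeneratesIn (NormalizerIn B S) S ∧ ∃ Υ : A → A, FaithfulCondExp B S Υ

/-- `B` is co-separable in `S`: `S` is generated, as a C*-algebra, by `B` together with a
countable set. -/
def CoSeparableIn [TopologicalSpace A] (B S : Set A) : Prop :=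
  ∃ T : Set A, T.Countable ∧ T ⊆ S ∧ GeneratesIn (B ∪ T) S

/-- The bounded complex functions on `Z`, i.e. `ℓ∞(Z)` with its pointwise `*`-algebra
structure. -/
def BddFuns (Z : Type*) : Set (Z → ℂ) := {f | ∃ C : ℝ, ∀ z, ‖f z‖ ≤ C}

/-- `B` is `*`-isomorphic to `ℓ∞(Z)`. -/
def IsoToLinf (B : Set A) (Z : Type*) : Prop :=
  ∃ e : A → (Z → ℂ), Set.BijOn e B (BddFuns Z) ∧
    (∀ a ∈ B, ∀ b ∈ B, e (a + b) = e a + e b) ∧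
    (∀ a ∈ B, ∀ b ∈ B, e (a * b) = e a * e b) ∧
    (∀ c : ℂ, ∀ a ∈ B, e (c • a) = c • e a) ∧
    (∀ a ∈ B, e (star a) = star (e a))

end Algebraic

/-- The diagonal operators on `ℓ₂(X)`; this is the canonical copy of `ℓ∞(X)` inside the
uniform Roe algebra. -/
def DiagSet (X : Type*) : Set (Bop X) := {a : Bop X | ∀ x z : X, x ≠ z → entry a x z = 0}

/-- `B` is a hereditary subalgebra of `S`: `b ∈ B`, `a ∈ S`, `0 ≤ a ≤ b` imply `a ∈ B`. -/
def HereditaryIn {X : Type*} (B S : Set (Bop X)) : Prop :=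
  ∀ b ∈ B, ∀ a ∈ S, a.IsPositive → (b - a).IsPositive → a ∈ B


/-!
Write `q = ⟪ξ, ·⟫ ξ` with `ξ` a unit vector; its support `S` satisfies `S × S ⊆ E`, and
`‖p ξ‖ ≥ ‖p q‖ ≥ δ`. Since `supp a ⊆ F`, the vector `a ξ` lives on the `F`-neighbourhood `A` of `S`,
and `A × A ⊆ F ∘ E ∘ F⁻¹`. As `p` is idempotent and `γ`-close to `a`, `χ_A p (p ξ) = χ_A (p ξ)` is
within `2γ` of `p ξ`, so `‖χ_A p‖ ≥ 1 - 2γ/δ = 1 - ε`; finally `‖p χ_A‖ = ‖χ_A p‖` by taking adjoints.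
-/

lemma IsProjection.isStarProjection {R : Type*} [Mul R] [Star R] {p : R}
    (hp : IsProjection p) : IsStarProjection p :=
  ⟨hp.2, hp.1⟩

section HilbertSpace

variable {E : Type*} [NormedAddCommGroup E] [InnerProductSpace ℂ E]

lemma RankOne.exists_unit_eq_inner_smul [CompleteSpace E] {q : E →L[ℂ] E} (hq : IsProjection q)
    (hq1 : RankOne q) : ∃ ξ : E, ‖ξ‖ = 1 ∧ ∀ v, q v = ⟪ξ, v⟫_ℂ • ξ := by
  obtain ⟨K, _, rfl⟩ := isStarProjection_iff_eq_starProjection.mp hq.isStarProjection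
  have hrank : Module.rank ℂ K = 1 := by
    rwa [RankOne, opRank, Submodule.range_starProjection] at hq1
  obtain ⟨v, hvK, hv0, hKv⟩ := (rank_submodule_eq_one_iff K).mp hrank
  have hK : K = ℂ ∙ v := le_antisymm hKv ((Submodule.span_singleton_le_iff_mem _ _).mpr hvK)
  set ξ : E := ((‖v‖⁻¹ : ℝ) : ℂ) • v
  have hξ : ‖ξ‖ = 1 := by
    simp [ξ, norm_smul, hv0]
  have hKξ : K = ℂ ∙ ξ := by
    rw [hK, Submodule.span_singleton_smul_eq]
    simpa using hv0
  subst hKξ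
  exact ⟨ξ, hξ, Submodule.starProjection_unit_singleton ℂ hξ⟩

lemma norm_mul_le_norm_apply_of_eq_inner_smul {p q : E →L[ℂ] E} {ξ : E} (hξ : ‖ξ‖ = 1)
    (hq : ∀ v, q v = ⟪ξ, v⟫_ℂ • ξ) : ‖p * q‖ ≤ ‖p ξ‖ := by
  refine ContinuousLinearMap.opNorm_le_bound _ (norm_nonneg _) fun v => ?_
  calc ‖(p * q) v‖ = ‖⟪ξ, v⟫_ℂ‖ * ‖p ξ‖ := by
        rw [mul_apply_eq_comp, hq, map_smul, norm_smul]
    _ ≤ (‖ξ‖ * ‖v‖) * ‖p ξ‖ := by gcongr; exact norm_inner_le_norm _ _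
    _ = ‖p ξ‖ * ‖v‖ := by rw [hξ]; ring

end HilbertSpace

lemma one_sub_le_norm_mul_of_approx {𝕜 F : Type*} [NontriviallyNormedField 𝕜]
    [NormedAddCommGroup F] [NormedSpace 𝕜 F] {p r a : F →L[𝕜] F} {ξ : F} {γ δ : ℝ}
    (hp : p * p = p) (hr : ‖r‖ ≤ 1) (hra : r (a ξ) = a ξ) (hξ : ‖ξ‖ ≤ 1)
    (hpa : ‖p - a‖ ≤ γ) (hδ : 0 < δ) (hpξ : δ ≤ ‖p ξ‖) :
    1 - 2 * γ / δ ≤ ‖r * p‖ := by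
  set η := p ξ
  have hη : 0 < ‖η‖ := hδ.trans_le hpξ
  have hγ : 0 ≤ γ := (norm_nonneg _).trans hpa
  have herr : ‖η - a ξ‖ ≤ γ := by
    calc ‖η - a ξ‖ = ‖(p - a) ξ‖ := rfl
      _ ≤ ‖p - a‖ * ‖ξ‖ := (p - a).le_opNorm ξ
      _ ≤ γ * 1 := by gcongr
      _ = γ := mul_one γ
  have hrη : ‖η‖ - 2 * γ ≤ ‖(r * p) η‖ := by
    have hsplit : (r * p) η = a ξ + r (η - a ξ) := by
      rw [mul_apply_eq_comp, ← mul_apply_eq_comp p p, hp, map_sub, hra, add_sub_cancel]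
    have hr_err : ‖r (η - a ξ)‖ ≤ γ :=
      (r.le_opNorm _).trans ((mul_le_of_le_one_left (norm_nonneg _) hr).trans herr)
    have htri := norm_sub_le (a ξ + r (η - a ξ)) (r (η - a ξ))
    rw [add_sub_cancel_right] at htri
    rw [hsplit]
    linarith [norm_sub_norm_le η (a ξ)]
  have hrel : 2 * γ ≤ 2 * γ / δ * ‖η‖ := by
    rw [div_mul_eq_mul_div, le_div_iff₀ hδ]
    exact mul_le_mul_of_nonneg_left hpξ (by linarith)
  refine le_of_mul_le_mul_right ?_ hη
  nlinarith [(r * p).le_opNorm η]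

open scoped SetRel in
lemma SetRel.preimage_prod_preimage_subset {α β : Type*} {E : SetRel β β} {F : SetRel α β}
    {S : Set β} (hS : S ×ˢ S ⊆ E) : F.preimage S ×ˢ F.preimage S ⊆ (F ○ E) ○ F.inv :=
  fun _ ⟨⟨z, hz, hxz⟩, ⟨z', hz', hx'z'⟩⟩ => ⟨z', ⟨z, hxz, hS ⟨hz, hz'⟩⟩, hx'z'⟩

section SequenceSpace

lemma delta_inner (f : l2 X) (x : X) : ⟪delta x, f⟫_ℂ = f x := by
  simp [delta, lp.inner_single_left]

lemma smul_delta (c : ℂ) (z : X) : c • delta z = lp.single 2 z c := by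
  rw [delta, ← lp.single_smul, smul_eq_mul, mul_one]

lemma hasSum_entry_mul (a : Bop X) (ξ : l2 X) (x : X) :
    HasSum (fun z => entry a x z * ξ z) (a ξ x) := by
  have h := (lp.hasSum_single (by norm_num) ξ).mapL ((innerSL ℂ (delta x)).comp a)
  simpa [← smul_delta, entry, delta_inner, mul_comm] using h

lemma chi_apply_coe (A : Set X) (f : l2 X) : ⇑(chi A f) = A.indicator ⇑f := rfl

lemma norm_chi_le (A : Set X) : ‖chi A‖ ≤ 1 :=
  LinearMap.mkContinuous_norm_le _ zero_le_one _

lemma isSelfAdjoint_chi (A : Set X) : IsSelfAdjoint (chi A) := by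
  rw [ContinuousLinearMap.isSelfAdjoint_iff_isSymmetric]
  intro f g
  rw [lp.inner_eq_tsum, lp.inner_eq_tsum]
  refine tsum_congr fun x => ?_
  by_cases hx : x ∈ A <;> simp [chi_apply_coe, hx]

lemma chi_preimage_apply_of_osupp_subset {a : Bop X} {F : SetRel X X} (ha : osupp a ⊆ F)
    (ξ : l2 X) : chi (F.preimage (Function.support ξ)) (a ξ) = a ξ := by
  refine lp.ext (funext fun x => ?_)
  by_cases hx : x ∈ F.preimage (Function.support ξ)
  · exact Set.indicator_of_mem hx _
  rw [chi_apply_coe, Set.indicator_of_notMem hx]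
  refine ((hasSum_entry_mul a ξ x).unique (hasSum_zero.congr_fun fun z => ?_)).symm
  by_cases hz : ξ z = 0
  · simp [hz]
  · have : entry a x z = 0 := not_not.mp fun hxz => hx ⟨z, hz, ha hxz⟩
    simp [this]

lemma support_prod_support_subset_osupp {q : Bop X} {ξ : l2 X}
    (hq : ∀ v, q v = ⟪ξ, v⟫_ℂ • ξ) : Function.support ξ ×ˢ Function.support ξ ⊆ osupp q := by
  rintro ⟨x, z⟩ ⟨hx, hz⟩
  have hξz : ⟪ξ, delta z⟫_ℂ = starRingEnd ℂ (ξ z) := by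
    rw [← delta_inner ξ z, inner_conj_symm]
  simpa [osupp, entry, hq, inner_smul_right, delta_inner, hξz] using And.intro hz hx

end SequenceSpace

theorem stmt_8_general {X : Type*} (𝓔 : CoarseStructure X) :
    ∀ ε δ : ℝ, 0 < ε → 0 < δ → ∃ γ : ℝ, 0 < γ ∧
      ∀ E ∈ 𝓔.sets, ∀ F ∈ 𝓔.sets, ∃ W ∈ 𝓔.sets,
        ∀ p q a : Bop X, IsProjection p → IsProjection q → RankOne q →
          osupp q ⊆ E → ‖p - a‖ < γ → osupp a ⊆ F → δ ≤ ‖p * q‖ →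
          IsNormed p ε W := by
  intro ε δ hε hδ
  refine ⟨δ * ε / 2, by positivity, fun E hE F hF => ?_⟩
  refine ⟨_, 𝓔.comp_mem (𝓔.comp_mem hF hE) (𝓔.inv_mem hF), ?_⟩
  intro p q a hp hq hq1 hqE hpa haF hpq
  obtain ⟨ξ, hξ, hqξ⟩ := hq1.exists_unit_eq_inner_smul hq
  set A := SetRel.preimage F (Function.support ξ)
  refine ⟨A, SetRel.preimage_prod_preimage_subset
    ((support_prod_support_subset_osupp hqξ).trans hqE), ?_⟩
  have hA : 1 - ε ≤ ‖chi A * p‖ := by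
    convert one_sub_le_norm_mul_of_approx hp.2 (norm_chi_le A)
      (chi_preimage_apply_of_osupp_subset haF ξ) hξ.le hpa.le hδ
      (hpq.trans (norm_mul_le_norm_apply_of_eq_inner_smul hξ hqξ)) using 2
    field_simp
  have hnorm : ‖p * chi A‖ = ‖chi A * p‖ := by
    rw [← norm_star, star_mul, (isSelfAdjoint_chi A).star_eq, hp.1]
  have hp1 : ‖p‖ ≤ 1 := hp.isStarProjection.norm_le
  rw [hnorm]
  nlinarith [norm_nonneg p, norm_nonneg (chi A * p)]

/-- Let `(X,𝓔)` be a uniformly locally finite coarse space. For all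
`ε, δ > 0` there is `γ > 0` such that for all `E, F ∈ 𝓔` there is `W ∈ 𝓔` for which the
following holds: if `p, q, a ∈ B(ℓ₂(X))` where `p` is a projection and `q` is a rank-one
projection, and `supp(q) ⊆ E`, `‖p − a‖ < γ`, `supp(a) ⊆ F`, and `‖pq‖ ≥ δ`, then `p` is
`(ε,W)`-normed. -/
theorem stmt_8 {X : Type*} (𝓔 : CoarseStructure X) (hulf : 𝓔.ULF) :
    ∀ ε δ : ℝ, 0 < ε → 0 < δ → ∃ γ : ℝ, 0 < γ ∧
      ∀ E ∈ 𝓔.sets, ∀ F ∈ 𝓔.sets, ∃ W ∈ 𝓔.sets,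
        ∀ p q a : Bop X, IsProjection p → IsProjection q → RankOne q →
          osupp q ⊆ E → ‖p - a‖ < γ → osupp a ⊆ F → δ ≤ ‖p * q‖ →
          IsNormed p ε W :=
  stmt_8_general 𝓔

end RoePaper
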